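/- arXiv:1302.6338 — 9 statements merged into one kernel-verified Lean document; each statement's English description precedes it below -/
import Mathlib

section
/- Let i ∈ {0,1} and let G = (V, lab, args, r, Sc) be a λ-ho-term-graph over the signature Σλ^i. Then for every vertex w ∈ V and every abstraction vertex v with w ∈ Sc(v): v is visited on every access path of w, and all vertices occurring on an access path of w strictly after v belong to Sc(v)\{v}. Consequently, since every vertex has an access path, the set of binders of w (the set of abstraction vertices v with w ∈ Sc(v)) is finite. -/
/-! Common framework: term graphs over a signature, homomorphisms, bisimulations,
    access paths, λ-ho-term-graphs, λ-ap-ho-term-graphs, λ-term-graphs with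
    scope delimiters, and the translation constructions. -/

inductive Lab3 : Type
  | app | lam | var
  deriving DecidableEq

/-- Arity function of the signature Σλ^i = {@, λ, 0} with ar(@)=2, ar(λ)=1, ar(0)=i. -/
def ar3 (i : ℕ) : Lab3 → ℕ
  | .app => 2
  | .lam => 1
  | .var => i

inductive Lab4 : Type
  | app | lam | var | del
  deriving DecidableEq

/-- Arity function of Σλ^{i,j} = {@, λ, 0, S} with ar(@)=2, ar(λ)=1, ar(0)=i, ar(S)=j. -/
def ar4 (i j : ℕ) : Lab4 → ℕ
  | .app => 2
  | .lam => 1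
  | .var => i
  | .del => j

def lab3to4 : Lab3 → Lab4
  | .app => .app
  | .lam => .lam
  | .var => .var

def lab4to3 : Lab4 → Lab3
  | .app => .app
  | .lam => .lam
  | .var => .var
  | .del => .var

/-- A term graph over a signature: vertex labelling, argument (successor) lists of
    length matching the arity of the label, a root, and every vertex reachable
    from the root. -/
structure TermGraph (L : Type) (ar : L → ℕ) (V : Type) where
  lab : V → L
  args : V → List V
  root : V
  args_len : ∀ v, (args v).length = ar (lab v)
  reach : ∀ v, Relation.ReflTransGen (fun a b => b ∈ args a) root v

namespace TermGraph

variable {L V : Type} {ar : L → ℕ}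

/-- `G.Succ k w w'` : `w'` is the `k`-th successor of `w` (the edge w ↣_k w'). -/
def Succ (G : TermGraph L ar V) (k : ℕ) (w w' : V) : Prop :=
  (G.args w)[k]? = some w'

/-- `G.Edge w w'` : `w'` is some successor of `w` (the relation ↣). -/
def Edge (G : TermGraph L ar V) (w w' : V) : Prop :=
  w' ∈ G.args w

/-- Reachability ↠ along edges. -/
def Reaches (G : TermGraph L ar V) (w w' : V) : Prop :=
  Relation.ReflTransGen G.Edge w w'

end TermGraph

/-- Homomorphism (functional bisimulation) of term graphs. -/
def IsHom {L V₁ V₂ : Type} {ar : L → ℕ} (h : V₁ → V₂)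
    (G₁ : TermGraph L ar V₁) (G₂ : TermGraph L ar V₂) : Prop :=
  (∀ v, G₂.lab (h v) = G₁.lab v) ∧
  (∀ v, G₂.args (h v) = (G₁.args v).map h) ∧
  h G₁.root = G₂.root

/-- Bisimulation between term graphs: a term graph on a set of pairs, rooted at the
    pair of roots, whose two projections are homomorphisms. -/
def Bisim {L V₁ V₂ : Type} {ar : L → ℕ}
    (G₁ : TermGraph L ar V₁) (G₂ : TermGraph L ar V₂) : Prop :=
  ∃ (S : Set (V₁ × V₂)) (R : TermGraph L ar S),
    (R.root : V₁ × V₂) = (G₁.root, G₂.root) ∧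
    IsHom (fun x : S => x.val.1) R G₁ ∧
    IsHom (fun x : S => x.val.2) R G₂

/-- An access path of a vertex `w`: a path from the root to `w` (with edge indices)
    that visits no vertex twice. -/
structure AccessPath {L V : Type} {ar : L → ℕ} (G : TermGraph L ar V) (w : V) where
  n : ℕ
  vs : Fin (n + 1) → V
  ks : Fin n → ℕ
  start : vs 0 = G.root
  finish : vs (Fin.last n) = w
  step : ∀ m : Fin n, G.Succ (ks m) (vs m.castSucc) (vs m.succ)
  inj : Function.Injective vs

/-- The conditions (root), (self), (nest), (closed), (scope)₀ and (for i = 1) (scope)₁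
    on a scope function. -/
def ScopeConds (i : ℕ) {V : Type} (G : TermGraph Lab3 (ar3 i) V)
    (Sc : V → Set V) : Prop :=
  (∀ v, G.lab v = .lam → G.root ∉ Sc v \ {v}) ∧
  (∀ v, G.lab v = .lam → v ∈ Sc v) ∧
  (∀ v₀ v₁, G.lab v₀ = .lam → G.lab v₁ = .lam → v₁ ∈ Sc v₀ \ {v₀} →
      Sc v₁ ⊆ Sc v₀ \ {v₀}) ∧
  (∀ v w wk k, G.lab v = .lam → G.Succ k w wk → wk ∈ Sc v \ {v} → w ∈ Sc v) ∧
  (∀ w, G.lab w = .var → ∃ v, G.lab v = .lam ∧ w ∈ Sc v \ {v}) ∧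
  (i = 1 → ∀ w w₀, G.lab w = .var → G.Succ 0 w w₀ →
      G.lab w₀ = .lam ∧ ∀ v, G.lab v = .lam → (w ∈ Sc v ↔ w₀ ∈ Sc v))

/-- λ-ho-term-graph over Σλ^i: a Σλ^i-term-graph endowed with a scope function. -/
structure LamHoTG (i : ℕ) (V : Type) extends TermGraph Lab3 (ar3 i) V where
  Sc : V → Set V
  conds : ScopeConds i toTermGraph Sc

/-- Correctness of an abstraction-prefix function for a Σλ^i-term-graph:
    (root), (λ), (@), (0)₀, and (for i = 1) (0)₁. -/
def CorrectAP (i : ℕ) {V : Type} (G : TermGraph Lab3 (ar3 i) V)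
    (P : V → List V) : Prop :=
  (P G.root = []) ∧
  (∀ w w₀, G.lab w = .lam → G.Succ 0 w w₀ → P w₀ <+: P w ++ [w]) ∧
  (∀ w wk k, G.lab w = .app → G.Succ k w wk → P wk <+: P w) ∧
  (∀ w, G.lab w = .var → P w ≠ []) ∧
  (i = 1 → ∀ w w₀, G.lab w = .var → G.Succ 0 w w₀ →
      G.lab w₀ = .lam ∧ P w₀ ++ [w₀] = P w)

/-- λ-ap-ho-term-graph over Σλ^i: a Σλ^i-term-graph endowed with a correct
    abstraction-prefix function. -/
structure LamApHoTG (i : ℕ) (V : Type) extends TermGraph Lab3 (ar3 i) V where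
  P : V → List V
  correct : CorrectAP i toTermGraph P

/-- `ScToP G Sc P` : the abstraction-prefix function `P` is the one obtained from the
    scope function `Sc` by the mapping A_i: for each vertex `w`, `P w` lists exactly
    the binders of `w` other than `w` itself, in order of strictly decreasing scopes. -/
def ScToP {i : ℕ} {V : Type} (G : TermGraph Lab3 (ar3 i) V)
    (Sc : V → Set V) (P : V → List V) : Prop :=
  ∀ w, (∀ v, v ∈ P w ↔ (G.lab v = .lam ∧ w ∈ Sc v ∧ v ≠ w)) ∧
    (P w).Chain' (fun a b => Sc b ⊂ Sc a)

/-- The scope function obtained from an abstraction-prefix function by the mapping B_i: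
    Sc(v) = { w | v occurs in P(w) } ∪ {v}. -/
def ScOfP {V : Type} (P : V → List V) : V → Set V :=
  fun v => {w | v ∈ P w} ∪ {v}

/-- Homomorphism of λ-ho-term-graphs (given by their underlying term graphs and
    scope functions). -/
def IsHoHom {i : ℕ} {V₁ V₂ : Type} (h : V₁ → V₂)
    (G₁ : TermGraph Lab3 (ar3 i) V₁) (Sc₁ : V₁ → Set V₁)
    (G₂ : TermGraph Lab3 (ar3 i) V₂) (Sc₂ : V₂ → Set V₂) : Prop :=
  IsHom h G₁ G₂ ∧ ∀ v, G₁.lab v = .lam → h '' Sc₁ v = Sc₂ (h v)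

/-- Homomorphism of λ-ap-ho-term-graphs (given by their underlying term graphs and
    abstraction-prefix functions). -/
def IsApHom {i : ℕ} {V₁ V₂ : Type} (h : V₁ → V₂)
    (G₁ : TermGraph Lab3 (ar3 i) V₁) (P₁ : V₁ → List V₁)
    (G₂ : TermGraph Lab3 (ar3 i) V₂) (P₂ : V₂ → List V₂) : Prop :=
  IsHom h G₁ G₂ ∧ ∀ v, (P₁ v).map h = P₂ (h v)

/-- Correctness of an abstraction-prefix function for a Σλ^{i,j}-term-graph:
    (root), (λ), (@), (0)₀, (0)₁ (for i = 1), (S)₁, and (S)₂ (for j = 2). -/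
def CorrectAP4 (i j : ℕ) {V : Type} (G : TermGraph Lab4 (ar4 i j) V)
    (P : V → List V) : Prop :=
  (P G.root = []) ∧
  (∀ w w₀, G.lab w = .lam → G.Succ 0 w w₀ → P w₀ = P w ++ [w]) ∧
  (∀ w wk k, G.lab w = .app → G.Succ k w wk → P wk = P w) ∧
  (∀ w, G.lab w = .var → P w ≠ []) ∧
  (i = 1 → ∀ w w₀, G.lab w = .var → G.Succ 0 w w₀ →
      G.lab w₀ = .lam ∧ P w₀ ++ [w₀] = P w) ∧
  (∀ w w₀, G.lab w = .del → G.Succ 0 w w₀ → ∃ v, P w₀ ++ [v] = P w) ∧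
  (j = 2 → ∀ w w₁, G.lab w = .del → G.Succ 1 w w₁ →
      G.lab w₁ = .lam ∧ P w₁ ++ [w₁] = P w)

/-- Vertex-set predicate of the construction G_i^j: original vertices (inl) together
    with scope-delimiter vertices (w, k, w', p) inserted along an edge w ↣_k w',
    one for each prefix p with P(w') < p ≤ P(w)·w (for λ-vertices w),
    resp. P(w') < p ≤ P(w) (for @-vertices w). -/
def GVP {i : ℕ} {V : Type} (G : TermGraph Lab3 (ar3 i) V) (P : V → List V) :
    V ⊕ (V × ℕ × V × List V) → Prop
  | .inl _ => True
  | .inr (w, k, w', p) =>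
      G.Succ k w w' ∧ P w' <+: p ∧ P w' ≠ p ∧
      ((G.lab w = .lam ∧ p <+: P w ++ [w]) ∨ (G.lab w = .app ∧ p <+: P w))

/-- Vertex set of the image of G_i^j. -/
def GVert {i : ℕ} {V : Type} (G : TermGraph Lab3 (ar3 i) V) (P : V → List V) : Type :=
  { x : V ⊕ (V × ℕ × V × List V) // GVP G P x }

/-- Labelling of the image of G_i^j: original labels on original vertices,
    `S` on the inserted delimiter vertices. -/
def GLab {i : ℕ} {V : Type} (G : TermGraph Lab3 (ar3 i) V) (P : V → List V)
    (x : GVert G P) : Lab4 :=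
  match x.val with
  | .inl w => lab3to4 (G.lab w)
  | .inr _ => .del

/-- The successor relation of the image of G_i^j (clauses as in the definition of
    the mapping G_i^j; for j = 2 the inserted S-vertices carry a 1-indexed back-link
    to the abstraction vertex whose extended scope they close). -/
def CSucc {i : ℕ} {V : Type} (j : ℕ) (G : TermGraph Lab3 (ar3 i) V) (P : V → List V)
    (k : ℕ) (x y : GVert G P) : Prop :=
  (∃ w wk, x.val = .inl w ∧ y.val = .inl wk ∧ G.Succ k w wk ∧
     (G.lab w = .var ∨ (G.lab w = .lam ∧ P wk = P w ++ [w]) ∨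
      (G.lab w = .app ∧ P wk = P w))) ∨
  (∃ w w₀, x.val = .inl w ∧ G.lab w = .lam ∧ G.Succ 0 w w₀ ∧ P w₀ ≠ P w ++ [w] ∧
     k = 0 ∧ y.val = .inr (w, 0, w₀, P w ++ [w])) ∨
  (∃ w wk, x.val = .inl w ∧ G.lab w = .app ∧ G.Succ k w wk ∧ P wk ≠ P w ∧
     y.val = .inr (w, k, wk, P w)) ∨
  (∃ w k' w' p v, x.val = .inr (w, k', w', p ++ [v]) ∧ k = 0 ∧ P w' ≠ p ∧
     y.val = .inr (w, k', w', p)) ∨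
  (∃ w k' w' v, x.val = .inr (w, k', w', P w' ++ [v]) ∧ k = 0 ∧ y.val = .inl w') ∨
  (j = 2 ∧ ∃ w k' w' p v, x.val = .inr (w, k', w', p ++ [v]) ∧ k = 1 ∧ y.val = .inl v)

/-- `IsGImage i j G P G'` : the Σλ^{i,j}-term-graph `G'` is the image of the
    λ-ap-ho-term-graph given by `G` and `P` under the mapping G_i^j. -/
def IsGImage (i j : ℕ) {V : Type} (G : TermGraph Lab3 (ar3 i) V) (P : V → List V)
    (G' : TermGraph Lab4 (ar4 i j) (GVert G P)) : Prop :=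
  (G'.root).val = .inl G.root ∧
  (∀ x, G'.lab x = GLab G P x) ∧
  (∀ k x y, G'.Succ k x y ↔ CSucc j G P k x y)

/-- One step along the 0-indexed edge of a scope-delimiter vertex. -/
def DelStep {i j : ℕ} {V : Type} (G : TermGraph Lab4 (ar4 i j) V) (a b : V) : Prop :=
  G.lab a = .del ∧ G.Succ 0 a b

/-- The non-delimiter vertices of a Σλ^{i,j}-term-graph. -/
def NVert {i j : ℕ} {V : Type} (G : TermGraph Lab4 (ar4 i j) V) : Type :=
  { v : V // G.lab v ≠ .del }

/-- `IsNImage i j G P G' P'` : the Σλ^i-term-graph `G'` with abstraction-prefix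
    function `P'` is the image of the λ-term-graph `G` (with correct prefix
    function `P`) under the mapping N_i^j: S-vertices are deleted, labels and the
    prefix function are restricted, the root is kept, and w₀ ↣'_k w₁ holds iff
    w₁ is reached from the k-th successor of w₀ by passing through finitely many
    S-vertices along their 0-indexed edges. -/
def IsNImage (i j : ℕ) {V : Type} (G : TermGraph Lab4 (ar4 i j) V) (P : V → List V)
    (G' : TermGraph Lab3 (ar3 i) (NVert G)) (P' : NVert G → List (NVert G)) : Prop :=
  (G'.root).val = G.root ∧
  (∀ x : NVert G, G'.lab x = lab4to3 (G.lab x.val)) ∧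
  (∀ k (a b : NVert G), G'.Succ k a b ↔
      ∃ u, G.Succ k a.val u ∧ Relation.ReflTransGen (DelStep G) u b.val) ∧
  (∀ v : NVert G, (P' v).map Subtype.val = P v.val)

/-- A λ-term-graph over Σλ^{1,2} (given by `G` with correct prefix function `P`) is
    fully back-linked if the last vertex of the abstraction prefix of any vertex `w`
    is reachable from `w`. -/
def FullyBackLinked {V : Type} (G : TermGraph Lab4 (ar4 1 2) V)
    (P : V → List V) : Prop :=
  ∀ w v p, P w = p ++ [v] → G.Reaches w v

/-- Eager-scope: whenever P(w) = p·v there is a path from `w` to `v` which ends with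
    a 0-indexed edge from a variable vertex to `v`, and all of whose intermediate
    vertices have abstraction prefixes extending P(w). -/
def EagerScope {V : Type} (G : TermGraph Lab4 (ar4 1 2) V)
    (P : V → List V) : Prop :=
  ∀ w v p, P w = p ++ [v] →
    ∃ (n : ℕ) (u : Fin (n + 1) → V),
      u 0 = w ∧
      (∀ m : Fin n, G.Edge (u m.castSucc) (u m.succ)) ∧
      G.Succ 0 (u (Fin.last n)) v ∧
      G.lab (u (Fin.last n)) = .var ∧
      ∀ m : Fin (n + 1), m ≠ 0 → P w <+: P (u m)

/-
An access path of `w` can be walked backwards from `w ∈ Sc(v)`: by (closed), the predecessor of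
a vertex of `Sc(v) \ {v}` lies in `Sc(v)`, and by (root) the walk cannot reach the root while
staying in `Sc(v) \ {v}`, so it must meet `v`. Access paths exist (follow a path from the root,
cutting back to the earlier occurrence whenever a vertex repeats), so every binder of `w` lies
on one fixed finite path.
-/

namespace AccessPath

variable {L V : Type} {ar : L → ℕ} {G : TermGraph L ar V}

def root (G : TermGraph L ar V) : AccessPath G G.root where
  n := 0
  vs _ := G.root
  ks := Fin.elim0
  start := rfl
  finish := rfl
  step := fun m => m.elim0
  inj _ _ _ := Subsingleton.elim (α := Fin 1) _ _

def take {w : V} (p : AccessPath G w) (j : Fin (p.n + 1)) : AccessPath G (p.vs j) where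
  n := j
  vs i := p.vs (Fin.castLE (by omega) i)
  ks i := p.ks (Fin.castLE (by omega) i)
  start := by rw [Fin.castLE_zero, p.start]
  finish := rfl
  step m := by
    rw [Fin.castLE_castSucc, Fin.castLE_succ]
    exact p.step _
  inj _ _ h := Fin.castLE_injective _ (p.inj h)

def snoc {w c : V} {k : ℕ} (p : AccessPath G w) (hk : G.Succ k w c)
    (hc : c ∉ Set.range p.vs) : AccessPath G c where
  n := p.n + 1
  vs := Fin.snoc p.vs c
  ks := Fin.snoc p.ks k
  start := by rw [← Fin.castSucc_zero, Fin.snoc_castSucc, p.start]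
  finish := Fin.snoc_last _ _
  step m := by
    induction m using Fin.lastCases with
    | last =>
      rw [Fin.succ_last, Fin.snoc_castSucc, Fin.snoc_last, p.finish]
      simpa using hk
    | cast m =>
      rw [Fin.snoc_castSucc, Fin.snoc_castSucc, Fin.succ_castSucc, Fin.snoc_castSucc]
      exact p.step m
  inj := Fin.snoc_injective_iff.mpr ⟨p.inj, hc⟩

theorem nonempty (G : TermGraph L ar V) (w : V) : Nonempty (AccessPath G w) := by
  induction G.reach w with
  | refl => exact ⟨root G⟩
  | @tail b c _ hbc ih =>
    obtain ⟨p⟩ := ih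
    by_cases hc : c ∈ Set.range p.vs
    · obtain ⟨j, rfl⟩ := hc
      exact ⟨p.take j⟩
    · obtain ⟨k, hk⟩ := List.mem_iff_getElem?.mp hbc
      exact ⟨p.snoc hk hc⟩

theorem exists_eq_and_forall_gt_mem_of_closed {w v : V} {S : Set V} (p : AccessPath G w)
    (hroot : G.root ∉ S \ {v}) (hclosed : ∀ k a b, G.Succ k a b → b ∈ S \ {v} → a ∈ S)
    (hw : w ∈ S) :
    ∃ m : Fin (p.n + 1), p.vs m = v ∧ ∀ m', m < m' → p.vs m' ∈ S \ {v} := by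
  classical
  obtain ⟨m, hm, hmax⟩ := (Finset.univ.filter fun m => p.vs m ∉ S \ {v}).exists_max_image id
    ⟨0, by simpa [p.start] using hroot⟩
  have hafter : ∀ m', m < m' → p.vs m' ∈ S \ {v} := fun m' hlt => by
    by_contra h
    exact absurd (hmax m' (by simpa using h)) (not_le.mpr hlt)
  refine ⟨m, ?_, hafter⟩
  have hmS : p.vs m ∈ S := by
    obtain ⟨j, rfl⟩ | rfl := Fin.eq_castSucc_or_eq_last m
    · exact hclosed _ _ _ (p.step j) (hafter _ Fin.castSucc_lt_succ)
    · rwa [p.finish]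
  by_contra hne
  exact (Finset.mem_filter.mp hm).2 ⟨hmS, hne⟩

end AccessPath

/-- Lemma 2.1(i): in a λ-ho-term-graph, if w ∈ Sc(v) then v is visited on every
    access path of w and all vertices after v on such a path lie in Sc(v)\{v};
    consequently the set of binders of w is finite. -/
theorem lhotg_access_path_and_finite_binders :
    ∀ i ∈ ({0, 1} : Set ℕ), ∀ (V : Type) (G : LamHoTG i V) (w : V),
      (∀ v, G.lab v = Lab3.lam → w ∈ G.Sc v →
        ∀ p : AccessPath G.toTermGraph w,
          ∃ m : Fin (p.n + 1), p.vs m = v ∧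
            ∀ m' : Fin (p.n + 1), m < m' → p.vs m' ∈ G.Sc v \ {v}) ∧
      {v : V | G.lab v = Lab3.lam ∧ w ∈ G.Sc v}.Finite := by
  intro i _ V G w
  obtain ⟨hroot, -, -, hclosed, -, -⟩ := G.conds
  have visit : ∀ v, G.lab v = Lab3.lam → w ∈ G.Sc v →
      ∀ p : AccessPath G.toTermGraph w,
        ∃ m : Fin (p.n + 1), p.vs m = v ∧
          ∀ m' : Fin (p.n + 1), m < m' → p.vs m' ∈ G.Sc v \ {v} := fun v hv hw p =>
    p.exists_eq_and_forall_gt_mem_of_closed (hroot v hv) (fun k a b => hclosed v a b k hv) hw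
  refine ⟨visit, ?_⟩
  obtain ⟨p⟩ := AccessPath.nonempty G.toTermGraph w
  exact (Set.finite_range p.vs).subset fun v ⟨hv, hw⟩ =>
    (visit v hv hw p).imp fun _ hm => hm.1
end

section
/- Let i ∈ {0,1} and let G = (V, lab, args, r, Sc) be a λ-ho-term-graph over Σλ^i. For all abstraction vertices v₁ ≠ v₂: if Sc(v₁) ∩ Sc(v₂) ≠ ∅, then Sc(v₁) ⊆ Sc(v₂)\{v₂} or Sc(v₂) ⊆ Sc(v₁)\{v₁}. Consequently, if Sc(v₁) ∩ Sc(v₂) ≠ ∅ for arbitrary abstraction vertices v₁, v₂, then Sc(v₁) ⊊ Sc(v₂) or Sc(v₁) = Sc(v₂) or Sc(v₂) ⊊ Sc(v₁). -/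
/-- Lemma 2.1(ii): scopes in a λ-ho-term-graph are properly nested. -/
theorem lhotg_scopes_nested :
    ∀ i ∈ ({0, 1} : Set ℕ), ∀ (V : Type) (G : LamHoTG i V),
      ∀ v₁ v₂ : V, G.lab v₁ = Lab3.lam → G.lab v₂ = Lab3.lam →
        (v₁ ≠ v₂ → (G.Sc v₁ ∩ G.Sc v₂).Nonempty →
          G.Sc v₁ ⊆ G.Sc v₂ \ {v₂} ∨ G.Sc v₂ ⊆ G.Sc v₁ \ {v₁}) ∧
        ((G.Sc v₁ ∩ G.Sc v₂).Nonempty →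
          G.Sc v₁ ⊂ G.Sc v₂ ∨ G.Sc v₁ = G.Sc v₂ ∨ G.Sc v₂ ⊂ G.Sc v₁) := by
  intro i _ V G v₁ v₂ h₁ h₂
  obtain ⟨hroot, hself, hnest, hclosed, -, -⟩ := G.conds
  -- Key claim: any vertex in both scopes forces one binder inside the other's scope.
  have key : ∀ w : V, w ∈ G.Sc v₁ → w ∈ G.Sc v₂ → v₁ ≠ v₂ →
      v₂ ∈ G.Sc v₁ \ {v₁} ∨ v₁ ∈ G.Sc v₂ \ {v₂} := by
    intro w hw1 hw2 hne
    have hreach := G.reach w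
    induction hreach with
    | refl =>
        -- w = root: root ∈ Sc v₁ \ {v₁} is impossible, so root = v₁; similarly v₂.
        have e1 : G.root = v₁ := by
          by_contra h
          exact hroot v₁ h₁ ⟨hw1, h⟩
        have e2 : G.root = v₂ := by
          by_contra h
          exact hroot v₂ h₂ ⟨hw2, h⟩
        exact absurd (e1 ▸ e2) hne
    | @tail u w hru hedge ih =>
        by_cases e1 : w = v₁
        · exact Or.inr ⟨e1 ▸ hw2, fun h => hne (Set.mem_singleton_iff.mp h)⟩
        · by_cases e2 : w = v₂
          · exact Or.inl ⟨e2 ▸ hw1, fun h => hne (Set.mem_singleton_iff.mp h).symm⟩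
          · obtain ⟨k, hk⟩ := List.mem_iff_getElem?.mp hedge
            have hu1 : u ∈ G.Sc v₁ := hclosed v₁ u w k h₁ hk ⟨hw1, e1⟩
            have hu2 : u ∈ G.Sc v₂ := hclosed v₂ u w k h₂ hk ⟨hw2, e2⟩
            exact ih hu1 hu2
  have part1 : v₁ ≠ v₂ → (G.Sc v₁ ∩ G.Sc v₂).Nonempty →
      G.Sc v₁ ⊆ G.Sc v₂ \ {v₂} ∨ G.Sc v₂ ⊆ G.Sc v₁ \ {v₁} := by
    intro hne ⟨w, hw1, hw2⟩
    rcases key w hw1 hw2 hne with h | h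
    · exact Or.inr (hnest v₁ v₂ h₁ h₂ h)
    · exact Or.inl (hnest v₂ v₁ h₂ h₁ h)
  refine ⟨part1, ?_⟩
  intro hne
  by_cases hv : v₁ = v₂
  · exact Or.inr (Or.inl (by rw [hv]))
  · rcases part1 hv hne with h | h
    · refine Or.inl ⟨fun x hx => (h hx).1, fun hsub => ?_⟩
      exact (h (hsub (hself v₂ h₂))).2 rfl
    · refine Or.inr (Or.inr ⟨fun x hx => (h hx).1, fun hsub => ?_⟩)
      exact (h (hsub (hself v₁ h₁))).2 rfl
end

section
/- Let i ∈ {0,1} and let G = (V, lab, args, r, Sc) be a λ-ho-term-graph over Σλ^i. For every vertex w ∈ V whose set of binders bds(w) := { v ∈ V(λ) : w ∈ Sc(v) } is nonempty, one can write bds(w) = {v₀, …, v_n} for abstraction vertices v₀, …, v_n such that the scopes are strictly linearly nested: Sc(v_n) ⊊ Sc(v_{n−1}) ⊊ … ⊊ Sc(v₀). -/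
/-! Walk backwards along a path from the root to `w`. By (closed), each vertex stays in the
scope of a binder `v` of `w` until `v` itself is met, and by (root) it cannot stay there up to
the root. Hence every binder of `w` lies on the path, and of two binders the one met first lies
strictly inside the scope of the other, so by (self) and (nest) their scopes are strictly nested. -/

theorem Set.Finite.exists_fin_range_eq_strictAnti {α β : Type*} [Preorder β] {g : α → β}
    {s : Set α} (hs : s.Finite) (hne : s.Nonempty)
    (hcmp : s.Pairwise fun x y => g x < g y ∨ g y < g x) :
    ∃ (n : ℕ) (f : Fin (n + 1) → α), s = Set.range f ∧ StrictAnti (g ∘ f) := by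
  classical
  have : IsStrictTotalOrder s fun x y => g y < g x :=
    { irrefl := fun x => lt_irrefl (g x)
      trans := fun _ _ _ hxy hyz => hyz.trans hxy
      trichotomous := fun x y hnxy hnyx => by
        by_contra hne
        exact (hcmp x.2 y.2 fun h => hne (Subtype.ext h)).elim hnyx hnxy }
  let := linearOrderOfSTO fun x y : s => g y < g x
  have := hs.fintype
  have hcard : Fintype.card s = Fintype.card s - 1 + 1 :=
    (Nat.sub_add_cancel (Fintype.card_pos_iff.mpr hne.to_subtype)).symm
  let e := monoEquivOfFin s hcard
  refine ⟨_, fun m => e m, ?_, fun m m' h => e.strictMono h⟩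
  ext x
  exact ⟨fun hx => ⟨e.symm ⟨x, hx⟩, by simp⟩, by rintro ⟨m, rfl⟩; exact (e m).2⟩

theorem mem_diff_singleton_or_mem_diff_singleton_of_mem {V : Type*} {S : V → Set V} {a v₁ v₂ : V}
    (h₁ : a ∈ S v₁) (h₂ : a ∈ S v₂) (hne : v₁ ≠ v₂) :
    (v₁ ∈ S v₂ \ {v₂} ∨ v₂ ∈ S v₁ \ {v₁}) ∨ (a ∈ S v₁ \ {v₁} ∧ a ∈ S v₂ \ {v₂}) := by
  by_cases e₁ : a = v₁
  · subst e₁; exact Or.inl (Or.inl ⟨h₂, hne⟩)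
  by_cases e₂ : a = v₂
  · subst e₂; exact Or.inl (Or.inr ⟨h₁, hne.symm⟩)
  exact Or.inr ⟨⟨h₁, e₁⟩, ⟨h₂, e₂⟩⟩

namespace LamHoTG

variable {i : ℕ} {V : Type} (G : LamHoTG i V)

def binders (w : V) : Set V :=
  {v | G.lab v = .lam ∧ w ∈ G.Sc v}

variable {G}

theorem mem_scope_of_edge {v a c : V} (hv : G.lab v = .lam) (hac : G.Edge a c)
    (hc : c ∈ G.Sc v \ {v}) : a ∈ G.Sc v := by
  obtain ⟨k, hk⟩ := List.mem_iff_getElem?.mp hac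
  exact G.conds.2.2.2.1 v a c k hv hk hc

theorem scope_ssubset_of_mem {v₁ v₂ : V} (hv₁ : G.lab v₁ = .lam) (hv₂ : G.lab v₂ = .lam)
    (h : v₁ ∈ G.Sc v₂ \ {v₂}) : G.Sc v₁ ⊂ G.Sc v₂ := by
  have hsub : G.Sc v₁ ⊆ G.Sc v₂ \ {v₂} := G.conds.2.2.1 v₂ v₁ hv₂ hv₁ h
  exact (Set.ssubset_iff_of_subset (hsub.trans Set.sdiff_subset)).mpr
    ⟨v₂, G.conds.2.1 v₂ hv₂, fun hv => (hsub hv).2 rfl⟩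

theorem finite_binders_not_mem_scope {a b : V} (h : G.Reaches a b) :
    {v | v ∈ G.binders b ∧ a ∉ G.Sc v \ {v}}.Finite := by
  induction h using Relation.ReflTransGen.head_induction_on with
  | refl =>
    refine (Set.finite_singleton b).subset fun v ⟨⟨_, hb⟩, hnot⟩ => ?_
    by_contra hne
    exact hnot ⟨hb, fun hbv => hne hbv.symm⟩
  | @head x _ hxc _ ih =>
    refine (ih.insert x).subset fun v ⟨hv, hnot⟩ => ?_
    by_cases hvx : v = x
    · exact Or.inl hvx
    exact Or.inr ⟨hv, fun hc => hnot ⟨mem_scope_of_edge hv.1 hxc hc, Ne.symm hvx⟩⟩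

theorem binders_nested_or_mem_scope {a b v₁ v₂ : V} (h : G.Reaches a b)
    (hv₁ : v₁ ∈ G.binders b) (hv₂ : v₂ ∈ G.binders b) (hne : v₁ ≠ v₂) :
    (v₁ ∈ G.Sc v₂ \ {v₂} ∨ v₂ ∈ G.Sc v₁ \ {v₁}) ∨
      (a ∈ G.Sc v₁ \ {v₁} ∧ a ∈ G.Sc v₂ \ {v₂}) := by
  induction h using Relation.ReflTransGen.head_induction_on with
  | refl => exact mem_diff_singleton_or_mem_diff_singleton_of_mem hv₁.2 hv₂.2 hne
  | head hxc _ ih =>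
    rcases ih with hnested | ⟨hc₁, hc₂⟩
    · exact Or.inl hnested
    · exact mem_diff_singleton_or_mem_diff_singleton_of_mem
        (mem_scope_of_edge hv₁.1 hxc hc₁) (mem_scope_of_edge hv₂.1 hxc hc₂) hne

theorem finite_binders (w : V) : (G.binders w).Finite :=
  (finite_binders_not_mem_scope (G.reach w)).subset fun v hv => ⟨hv, G.conds.1 v hv.1⟩

theorem scope_ssubset_or_ssubset {w v₁ v₂ : V} (hv₁ : v₁ ∈ G.binders w)
    (hv₂ : v₂ ∈ G.binders w) (hne : v₁ ≠ v₂) :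
    G.Sc v₁ ⊂ G.Sc v₂ ∨ G.Sc v₂ ⊂ G.Sc v₁ := by
  rcases binders_nested_or_mem_scope (G.reach w) hv₁ hv₂ hne with h | ⟨hroot, _⟩
  · exact h.imp (scope_ssubset_of_mem hv₁.1 hv₂.1) (scope_ssubset_of_mem hv₂.1 hv₁.1)
  · exact absurd hroot (G.conds.1 v₁ hv₁.1)

end LamHoTG

/-- Lemma 2.1(iii): the binders of a vertex with nonempty binder set can be listed as
    v₀, …, v_n with strictly linearly nested scopes Sc(v_n) ⊊ … ⊊ Sc(v₀). -/
theorem lhotg_binders_linearly_nested :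
    ∀ i ∈ ({0, 1} : Set ℕ), ∀ (V : Type) (G : LamHoTG i V), ∀ w : V,
      {v : V | G.lab v = Lab3.lam ∧ w ∈ G.Sc v}.Nonempty →
      ∃ (n : ℕ) (f : Fin (n + 1) → V),
        {v : V | G.lab v = Lab3.lam ∧ w ∈ G.Sc v} = Set.range f ∧
        ∀ m m' : Fin (n + 1), m < m' → G.Sc (f m') ⊂ G.Sc (f m) := by
  intro i _ V G w hw
  exact (G.finite_binders w).exists_fin_range_eq_strictAnti hw
    fun _ hv₁ _ hv₂ hne => LamHoTG.scope_ssubset_or_ssubset hv₁ hv₂ hne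
end

section
/- Let i ∈ {0,1} and let G = (V, lab, args, r, P) be a λ-ap-ho-term-graph over Σλ^i. If a vertex v occurs in the abstraction prefix P(w) of a vertex w, then: v is an abstraction vertex (lab(v) = λ), v occurs exactly once in P(w), every access path of w passes through v but does not end there (so w ≠ v), and P(v)·v is a prefix of P(w); in particular, if P(w) = p·v then P(v) = p. -/
/-- Along any edge, the abstraction prefix of the target is a prefix of
    `P x ++ [x]`, and even of `P x` unless `x` is an abstraction vertex. -/
lemma step_prefix {i : ℕ} (hi : i = 0 ∨ i = 1) {V : Type} (G : LamApHoTG i V)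
    {x x' : V} (h : x' ∈ G.args x) :
    G.P x' <+: G.P x ++ [x] ∧ (G.lab x ≠ Lab3.lam → G.P x' <+: G.P x) := by
  obtain ⟨k, hk, hget⟩ := List.getElem_of_mem h
  have hsucc : G.toTermGraph.Succ k x x' := by
    simp [TermGraph.Succ, List.getElem?_eq_getElem hk, hget]
  have hlen := G.args_len x
  obtain ⟨h1, h2, h3, h4, h5⟩ := G.correct
  cases hl : G.lab x with
  | app =>
    have := h3 x x' k hl hsucc
    exact ⟨this.trans (List.prefix_append _ _), fun _ => this⟩
  | lam =>
    have hk0 : k = 0 := by rw [hl] at hlen; simp [ar3] at hlen; omega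
    subst hk0
    exact ⟨h2 x x' hl hsucc, fun hc => absurd rfl hc⟩
  | var =>
    rcases hi with hi | hi
    · subst hi; rw [hl] at hlen; simp [ar3] at hlen; rw [hlen] at hk; simp at hk
    · subst hi
      have hk0 : k = 0 := by rw [hl] at hlen; simp [ar3] at hlen; omega
      subst hk0
      have := (h5 rfl x x' hl hsucc).2
      have hp : G.P x' <+: G.P x := ⟨[x'], this⟩
      exact ⟨hp.trans (List.prefix_append _ _), fun _ => hp⟩

/-- Key invariant: every decomposition of an abstraction prefix determines the
    label and prefix of the occurring vertex. -/
lemma ap_inv {i : ℕ} (hi : i = 0 ∨ i = 1) {V : Type} (G : LamApHoTG i V)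
    (w : V) : ∀ q v r, G.P w = q ++ v :: r → G.lab v = Lab3.lam ∧ G.P v = q := by
  have hr := G.reach w
  induction hr with
  | refl =>
    intro q v r hq
    rw [G.correct.1] at hq
    exact absurd hq (by simp)
  | tail _hbc hedge ih =>
    rename_i b c
    intro q v r hq
    obtain ⟨hpre, hnl⟩ := step_prefix hi G hedge
    have hqv : q ++ [v] <+: G.P b ++ [b] := by
      refine List.IsPrefix.trans ?_ hpre
      rw [hq]; exact ⟨r, by simp⟩
    have hql : q.length + 1 ≤ (G.P b).length + 1 := by
      have := hqv.length_le; simpa using this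
    rcases eq_or_lt_of_le (Nat.lt_succ_iff.mp hql) with hcase | hcase
    · -- q.length = (G.P b).length : v = b, q = G.P b
      have heq : q ++ [v] = G.P b ++ [b] := List.IsPrefix.eq_of_length hqv (by simp [hcase])
      obtain ⟨hq2, hv2⟩ := List.append_inj' heq rfl
      have hvb : v = b := by simpa using hv2
      constructor
      · rw [hvb]
        by_contra hcl
        have h2 : q ++ [v] <+: G.P b := by
          refine List.IsPrefix.trans ?_ (hnl hcl)
          rw [hq]; exact ⟨r, by simp⟩
        have := h2.length_le
        rw [hq2] at this; simp at this
      · rw [hvb, ← hq2]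
    · -- q ++ [v] fits inside G.P b
      have h2 : q ++ [v] <+: G.P b :=
        List.prefix_of_prefix_length_le hqv (List.prefix_append _ _) (by simp; omega)
      rcases h2 with ⟨t, ht⟩
      exact ih q v t (by rw [← ht]; simp)


/-- A list whose elements' "prefix before" is determined has no duplicates. -/
lemma nodup_of_det {V : Type} (f : V → List V) :
    ∀ (l s : List V), (∀ q x r, l = q ++ x :: r → f x = s ++ q) → l.Nodup := by
  intro l
  induction l with
  | nil => intro _ _; exact List.nodup_nil
  | cons a t ih =>
    intro s hdet
    refine List.nodup_cons.mpr ⟨?_, ih (s ++ [a]) ?_⟩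
    · intro hmem
      obtain ⟨q, r, hqr⟩ := List.append_of_mem hmem
      have h1 : f a = s := by simpa using hdet [] a t rfl
      have h2 : f a = s ++ (a :: q) := hdet (a :: q) a r (by simp [hqr])
      rw [h1] at h2
      have := congrArg List.length h2
      simp at this
    · intro q x r hqr
      have := hdet (a :: q) x r (by simp [hqr])
      rw [this]; simp

/-- Lemma 3.1(i): if v occurs in the abstraction prefix P(w) of a λ-ap-ho-term-graph,
    then v is an abstraction vertex, occurs only once in P(w), every access path of w
    passes through v but does not end there (so w ≠ v), P(v)·v is a prefix of P(w),
    and if P(w) = p·v then P(v) = p. -/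
theorem laphotg_prefix_occurrence :
    ∀ i ∈ ({0, 1} : Set ℕ), ∀ (V : Type) [DecidableEq V], ∀ (G : LamApHoTG i V),
      ∀ w v : V, v ∈ G.P w →
        G.lab v = Lab3.lam ∧
        (G.P w).count v = 1 ∧
        (∀ p : AccessPath G.toTermGraph w,
          ∃ m : Fin (p.n + 1), p.vs m = v ∧ m ≠ Fin.last p.n) ∧
        w ≠ v ∧
        (G.P v ++ [v]) <+: G.P w ∧
        (∀ q : List V, G.P w = q ++ [v] → G.P v = q) := by
  intro i hi V _ G w v hv
  have hi' : i = 0 ∨ i = 1 := by simpa using hi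
  have inv := ap_inv hi' G
  obtain ⟨q, r, hqr⟩ := List.append_of_mem hv
  obtain ⟨hlam, hPv⟩ := inv w q v r hqr
  have hnodup : (G.P w).Nodup :=
    nodup_of_det G.P (G.P w) [] (fun q x r h => by simpa using (inv w q x r h).2)
  refine ⟨hlam, List.count_eq_one_of_mem hnodup hv, ?_, ?_, ?_, ?_⟩
  · -- access paths
    intro p
    have key : ∀ m : ℕ, ∀ hm : m < p.n + 1, v ∈ G.P (p.vs ⟨m, hm⟩) →
        ∃ m' : Fin (p.n + 1), m'.val < m ∧ p.vs m' = v := by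
      intro m
      induction m with
      | zero =>
        intro hm hmem
        have h0 : p.vs ⟨0, hm⟩ = G.root := p.start
        rw [h0, G.correct.1] at hmem
        simp at hmem
      | succ m ihm =>
        intro hm hmem
        have hmn : m < p.n := by omega
        have hstep := p.step ⟨m, hmn⟩
        have hedge : p.vs (⟨m, hmn⟩ : Fin p.n).succ ∈
            G.args (p.vs (⟨m, hmn⟩ : Fin p.n).castSucc) := by
          have := hstep
          unfold TermGraph.Succ at this
          exact List.mem_of_getElem? this
        have hpre := (step_prefix hi' G hedge).1
        have hsucceq : (⟨m, hmn⟩ : Fin p.n).succ = (⟨m + 1, hm⟩ : Fin (p.n + 1)) := rfl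
        have hcasteq : (⟨m, hmn⟩ : Fin p.n).castSucc =
            (⟨m, by omega⟩ : Fin (p.n + 1)) := rfl
        rw [hsucceq, hcasteq] at hpre
        have hmem2 : v ∈ G.P (p.vs ⟨m, by omega⟩) ++ [p.vs ⟨m, by omega⟩] :=
          hpre.subset hmem
        rcases List.mem_append.mp hmem2 with h | h
        · obtain ⟨m', hm', hvm'⟩ := ihm (by omega) h
          exact ⟨m', by omega, hvm'⟩
        · exact ⟨⟨m, by omega⟩, by simp, (List.mem_singleton.mp h).symm⟩
    have hlast : (Fin.last p.n) = (⟨p.n, by omega⟩ : Fin (p.n + 1)) := rfl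
    have hvw : v ∈ G.P (p.vs ⟨p.n, by omega⟩) := by
      rw [← hlast, p.finish]; exact hv
    obtain ⟨m', hm', hvm'⟩ := key p.n (by omega) hvw
    exact ⟨m', hvm', by rw [Fin.ne_iff_vne, hlast]; simp; omega⟩
  · -- w ≠ v
    intro hwv
    rw [← hwv] at hPv
    rw [hqr] at hPv
    have := congrArg List.length hPv
    simp at this
  · -- P v ++ [v] <+: P w
    rw [hqr, hPv]
    exact ⟨r, by simp⟩
  · intro q' hq'
    exact (inv w q' v [] hq').2
end

section
/- Let i ∈ {0,1} and let G = (V, lab, args, r, P) be a λ-ap-ho-term-graph over Σλ^i. Then: (a) all vertices occurring in abstraction prefixes are abstraction vertices, i.e. P is of the form P: V → (V(λ))*; and (b) no abstraction vertex occurs in its own abstraction prefix: for all v ∈ V(λ), v does not occur in P(v). -/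
/-! Along every edge `w ↣ w'` of a λ-ap-ho-term-graph, each vertex of `P(w')` already occurs
in `P(w)`, except for `w` itself when `w` is an abstraction vertex: the conditions (λ) and (@)
make `P(w')` a prefix of `P(w)·w` resp. `P(w)`, and (0)₁ makes `P(w')` a proper prefix of `P(w)`.
Induction along a path from the root (where `P(r) = ε`) then shows that every vertex occurring
in a prefix is an abstraction vertex `v` with `v ∉ P(v)`: when `v` enters a prefix at the edge
leaving `v`, the induction hypothesis already applies to `P(v)`. -/

namespace TermGraph

variable {L V : Type} {ar : L → ℕ}

theorem Edge.exists_succ {G : TermGraph L ar V} {a b : V} (h : G.Edge a b) :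
    ∃ k, G.Succ k a b := by
  obtain ⟨k, hk, rfl⟩ := List.mem_iff_getElem.mp h
  exact ⟨k, List.getElem?_eq_getElem hk⟩

theorem Succ.lt_ar {G : TermGraph L ar V} {k : ℕ} {a b : V} (h : G.Succ k a b) :
    k < ar (G.lab a) :=
  G.args_len a ▸ (List.getElem?_eq_some_iff.mp h).1

end TermGraph

namespace CorrectAP

variable {i : ℕ} {V : Type} {G : TermGraph Lab3 (ar3 i) V} {P : V → List V}

theorem mem_or_eq_of_edge (hi : i ≤ 1) (hP : CorrectAP i G P) {a b v : V} (hab : G.Edge a b)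
    (hv : v ∈ P b) : v ∈ P a ∨ (v = a ∧ G.lab a = .lam) := by
  obtain ⟨_, hlam, happ, _, hvar⟩ := hP
  obtain ⟨k, hk⟩ := hab.exists_succ
  have hlt := hk.lt_ar
  cases hla : G.lab a with
  | lam =>
    obtain rfl : k = 0 := by simpa [hla, ar3] using hlt
    rcases List.mem_append.mp ((hlam a b hla hk).subset hv) with h | h
    · exact .inl h
    · exact .inr ⟨List.mem_singleton.mp h, rfl⟩
  | app => exact .inl ((happ a b k hla hk).subset hv)
  | var =>
    rw [hla, ar3] at hlt
    obtain ⟨rfl, rfl⟩ : i = 1 ∧ k = 0 := by omega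
    rw [← (hvar rfl a b hla hk).2]
    exact .inl (List.mem_append_left _ hv)

theorem lab_eq_lam_and_not_mem_self (hi : i ≤ 1) (hP : CorrectAP i G P) (w : V) :
    ∀ v ∈ P w, G.lab v = .lam ∧ v ∉ P v := by
  induction G.reach w with
  | refl => simp [hP.1]
  | tail _ hab ih =>
    intro v hv
    rcases hP.mem_or_eq_of_edge hi hab hv with h | ⟨rfl, hlam⟩
    · exact ih v h
    · exact ⟨hlam, fun h => (ih v h).2 h⟩

end CorrectAP

/-- Lemma 3.1(ii),(iii): in a λ-ap-ho-term-graph, all vertices occurring in abstraction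
    prefixes are abstraction vertices, and no abstraction vertex occurs in its own
    abstraction prefix. -/
theorem laphotg_prefix_vertices :
    ∀ i ∈ ({0, 1} : Set ℕ), ∀ (V : Type) (G : LamApHoTG i V),
      (∀ w v : V, v ∈ G.P w → G.lab v = Lab3.lam) ∧
      (∀ v : V, G.lab v = Lab3.lam → v ∉ G.P v) := by
  intro i hi V G
  have hi : i ≤ 1 := by rcases hi with rfl | rfl <;> norm_num
  have key := G.correct.lab_eq_lam_and_not_mem_self hi
  exact ⟨fun w v hv => (key w v hv).1, fun v _ hv => (key v v hv).2 hv⟩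
end

section
/- Let i ∈ {0,1} and let G = (V, lab, args, r, P) be a λ-ap-ho-term-graph over Σλ^i. Then while access paths might end in variable vertices (vertices in V(0)), every vertex visited at a non-final position of an access path belongs to V(λ) ∪ V(@); that is, access paths only pass through abstraction and application vertices. -/
/-! Along an access path the abstraction prefix of the current vertex only ever grows by the
λ-vertex just left (conditions (root), (λ), (@), (0)₁), so every vertex in the prefix of a
vertex on the path was visited earlier. By (0)₁ the successor of a variable vertex lies in
its prefix, so stepping on from a variable vertex would revisit a vertex; for `i = 0`
variable vertices have no successors at all. -/

theorem TermGraph.Succ.lt_ar_s5 {L V : Type} {ar : L → ℕ} {G : TermGraph L ar V} {k : ℕ}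
    {w w' : V} (h : G.Succ k w w') : k < ar (G.lab w) :=
  G.args_len w ▸ (List.getElem?_eq_some_iff.mp h).1

namespace CorrectAP

variable {i : ℕ} {V : Type} {G : TermGraph Lab3 (ar3 i) V} {P : V → List V}

theorem append_eq_of_var (hP : CorrectAP i G P) (hi : i ≤ 1) {k : ℕ} {w w' : V}
    (hw : G.lab w = .var) (h : G.Succ k w w') : P w' ++ [w'] = P w := by
  have hk : k < i := by simpa [hw, ar3] using h.lt_ar_s5
  obtain rfl : i = 1 := by omega
  obtain rfl : k = 0 := by omega
  exact (hP.2.2.2.2 rfl w w' hw h).2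

theorem mem_of_succ (hP : CorrectAP i G P) (hi : i ≤ 1) {k : ℕ} {w w' v : V}
    (h : G.Succ k w w') (hv : v ∈ P w') : v ∈ P w ∨ v = w := by
  cases hw : G.lab w with
  | app => exact .inl ((hP.2.2.1 w w' k hw h).subset hv)
  | lam =>
    have hk : k < 1 := by simpa [hw, ar3] using h.lt_ar_s5
    obtain rfl : k = 0 := by omega
    simpa using (hP.2.1 w w' hw h).subset hv
  | var => exact .inl (hP.append_eq_of_var hi hw h ▸ List.mem_append_left _ hv)

theorem exists_lt_vs_eq_of_mem (hP : CorrectAP i G P) (hi : i ≤ 1) {w : V}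
    (p : AccessPath G w) (m : Fin (p.n + 1)) {v : V} (hv : v ∈ P (p.vs m)) :
    ∃ m' < m, p.vs m' = v := by
  induction m using Fin.induction generalizing v with
  | zero => simp [p.start, hP.1] at hv
  | succ t ih =>
    rcases hP.mem_of_succ hi (p.step t) hv with hv | rfl
    · obtain ⟨m', hm', rfl⟩ := ih hv
      exact ⟨m', hm'.trans t.castSucc_lt_succ, rfl⟩
    · exact ⟨t.castSucc, t.castSucc_lt_succ, rfl⟩

end CorrectAP

/-- Lemma 3.1(iv): in a λ-ap-ho-term-graph, access paths may end in variable vertices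
    but pass only through abstraction and application vertices: every vertex at a
    non-final position of an access path lies in V(λ) ∪ V(@). -/
theorem laphotg_access_path_through_lam_app :
    ∀ i ∈ ({0, 1} : Set ℕ), ∀ (V : Type) (G : LamApHoTG i V),
      ∀ (w : V) (p : AccessPath G.toTermGraph w) (m : Fin p.n),
        G.lab (p.vs m.castSucc) = Lab3.lam ∨ G.lab (p.vs m.castSucc) = Lab3.app := by
  intro i hi V G w p m
  have hi : i ≤ 1 := by rcases hi with rfl | rfl <;> simp
  cases hw : G.lab (p.vs m.castSucc) with
  | lam => exact .inl rfl
  | app => exact .inr rfl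
  | var =>
    have hsucc : p.vs m.succ ∈ G.P (p.vs m.castSucc) := by
      rw [← G.correct.append_eq_of_var hi hw (p.step m)]
      exact List.mem_append_right _ (List.mem_singleton_self _)
    obtain ⟨m', hm', he⟩ := G.correct.exists_lt_vs_eq_of_mem hi p m.castSucc hsucc
    exact absurd (p.inj he) (hm'.trans m.castSucc_lt_succ).ne
end

section
/- For each i ∈ {0,1}, the following two mappings are well-defined between the class H^i of λ-ho-term-graphs over Σλ^i and the class HAP^i of λ-ap-ho-term-graphs over Σλ^i: (1) A_i: H^i → HAP^i sends (V, lab, args, r, Sc) to (V, lab, args, r, P) where, for a vertex w whose set of binders other than w itself is {v₀, …, v_n} with Sc(v_n) ⊊ Sc(v_{n−1}) ⊊ … ⊊ Sc(v₀), the abstraction prefix is P(w) := v₀⋯v_n (and P(w) := ε if there are no such binders); then P is a correct abstraction-prefix function. (2) B_i: HAP^i → H^i sends (V, lab, args, r, P) to (V, lab, args, r, Sc) where Sc(v) := { w ∈ V : v occurs in P(w) } ∪ {v} for each abstraction vertex v; then Sc satisfies the scope-function conditions. -/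
/-!
For `A_i`: by (closed), every proper binder of a successor of `w` is `w` or a proper binder of
`w`, so induction along a path from the root yields the binder list, sorted by (nest). Each
correctness condition then asks one such list to be a prefix of another; a list sorted by an
asymmetric relation is a prefix of a second sorted list as soon as it is contained in it and
closed under predecessors there, and (nest) makes the binder lists closed in this sense.

For `B_i`: induction along a path from the root shows that whenever `q·v` is a prefix of `P(w)`,
`v` is an abstraction with `P(v) = q`; this is exactly the nesting of the scopes
`{w | v ∈ P(w)} ∪ {v}`.
-/

theorem List.prefix_of_pairwise_of_closed {α : Type*} {r : α → α → Prop}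
    (hr : ∀ a b, r a b → ¬ r b a) :
    ∀ {l₁ l₂ : List α}, l₁.Pairwise r → l₂.Pairwise r → (∀ a ∈ l₁, a ∈ l₂) →
      (∀ a ∈ l₂, ∀ b ∈ l₁, r a b → a ∈ l₁) → l₁ <+: l₂
  | [], _, _, _, _, _ => nil_prefix
  | a :: _, [], _, _, hsub, _ => absurd (hsub a mem_cons_self) not_mem_nil
  | a :: t₁, b :: t₂, h₁, h₂, hsub, hcl => by
    rw [pairwise_cons] at h₁ h₂
    have hirr : ∀ x, ¬ r x x := fun x h => hr x x h h
    obtain rfl : a = b := by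
      by_contra hne
      have hat₂ : a ∈ t₂ := (mem_cons.1 (hsub a mem_cons_self)).resolve_left hne
      have hba := h₂.1 a hat₂
      have hbt₁ : b ∈ t₁ :=
        (mem_cons.1 (hcl b mem_cons_self a mem_cons_self hba)).resolve_left (Ne.symm hne)
      exact hr _ _ hba (h₁.1 b hbt₁)
    refine cons_prefix_cons.2 ⟨rfl, prefix_of_pairwise_of_closed hr h₁.2 h₂.2 ?_ ?_⟩
    · intro x hx
      refine (mem_cons.1 (hsub x (mem_cons_of_mem _ hx))).resolve_left ?_
      rintro rfl
      exact hirr _ (h₁.1 _ hx)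
    · intro x hx y hy hxy
      refine (mem_cons.1 (hcl x (mem_cons_of_mem _ hx) y (mem_cons_of_mem _ hy) hxy)).resolve_left ?_
      rintro rfl
      exact hirr _ (h₂.1 _ hx)

theorem TermGraph.succ_lt {L V : Type} {ar : L → ℕ} (G : TermGraph L ar V)
    {k : ℕ} {w w' : V} (h : G.Succ k w w') : k < ar (G.lab w) :=
  G.args_len w ▸ (List.getElem?_eq_some_iff.1 h).1

section ScopeToPrefix

variable {i : ℕ} {V : Type} {G : TermGraph Lab3 (ar3 i) V} {Sc : V → Set V}

def ProperBinder (G : TermGraph Lab3 (ar3 i) V) (Sc : V → Set V) (v w : V) : Prop :=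
  G.lab v = .lam ∧ w ∈ Sc v ∧ v ≠ w

namespace ScopeConds

variable (hc : ScopeConds i G Sc)
include hc

theorem not_properBinder_root (v : V) : ¬ ProperBinder G Sc v G.root :=
  fun ⟨hv, hr, hne⟩ => hc.1 v hv ⟨hr, fun h => hne h.symm⟩

theorem ssubset_of_properBinder {a b : V} (hab : ProperBinder G Sc a b)
    (hb : G.lab b = .lam) : Sc b ⊂ Sc a := by
  obtain ⟨-, hself, hnest, -⟩ := hc
  have hsub := hnest a b hab.1 hb ⟨hab.2.1, fun h => hab.2.2 h.symm⟩
  exact ⟨hsub.trans Set.sdiff_subset, fun h => (hsub (h (hself a hab.1))).2 rfl⟩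

theorem properBinder_of_ssubset {a b x : V} (hb : ProperBinder G Sc b x)
    (ha : G.lab a = .lam) (hab : Sc b ⊂ Sc a) : ProperBinder G Sc a x := by
  obtain ⟨-, hself, hnest, -⟩ := hc
  have hba : b ∈ Sc a \ {a} := ⟨hab.1 (hself b hb.1), fun h => hab.ne (congrArg Sc h)⟩
  have hx := hnest a b ha hb.1 hba hb.2.1
  exact ⟨ha, hx.1, fun h => hx.2 h.symm⟩

theorem properBinder_of_succ {k : ℕ} {v w w' : V} (hk : G.Succ k w w')
    (hv : ProperBinder G Sc v w') : v = w ∨ ProperBinder G Sc v w := by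
  have hw : w ∈ Sc v := hc.2.2.2.1 v w w' k hv.1 hk ⟨hv.2.1, fun h => hv.2.2 h.symm⟩
  exact (eq_or_ne v w).imp_right fun hne => ⟨hv.1, hw, hne⟩

theorem exists_binder_list (w : V) :
    ∃ l : List V, (∀ v, v ∈ l ↔ ProperBinder G Sc v w) ∧
      l.Pairwise (fun a b => Sc b ⊂ Sc a) := by
  classical
  induction G.reach w with
  | refl => exact ⟨[], fun v => iff_of_false List.not_mem_nil (hc.not_properBinder_root v), .nil⟩
  | @tail b c _ hbc ih =>
    obtain ⟨l, hmem, hl⟩ := ih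
    obtain ⟨k, hk⟩ := List.mem_iff_getElem?.1 hbc
    refine ⟨(l ++ [b]).filter (ProperBinder G Sc · c), fun v => ?_, ?_⟩
    · rw [List.mem_filter, decide_eq_true_iff]
      refine ⟨And.right, fun hv => ⟨?_, hv⟩⟩
      rcases hc.properBinder_of_succ hk hv with rfl | hvb
      · exact List.mem_append_right _ (List.mem_singleton_self v)
      · exact List.mem_append_left _ ((hmem v).2 hvb)
    · rw [List.pairwise_filter, List.pairwise_append]
      refine ⟨hl.imp fun h _ _ => h, List.pairwise_singleton _ _, fun a ha b' hb' _ hb'c => ?_⟩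
      obtain rfl := List.mem_singleton.1 hb'
      exact hc.ssubset_of_properBinder ((hmem a).1 ha) (decide_eq_true_iff.1 hb'c).1

theorem exists_scToP : ∃ P : V → List V, ScToP G Sc P := by
  choose P hmem hP using hc.exists_binder_list
  exact ⟨P, fun w => ⟨hmem w, (hP w).isChain⟩⟩

theorem prefix_of_forall_mem {w : V} {l₁ l₂ : List V}
    (h₁ : l₁.Pairwise (fun a b => Sc b ⊂ Sc a)) (hmem : ∀ v, v ∈ l₁ ↔ ProperBinder G Sc v w)
    (h₂ : l₂.Pairwise (fun a b => Sc b ⊂ Sc a)) (hlam : ∀ a ∈ l₂, G.lab a = .lam)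
    (hsub : ∀ v ∈ l₁, v ∈ l₂) : l₁ <+: l₂ :=
  List.prefix_of_pairwise_of_closed (fun _ _ h h' => ssubset_asymm h h') h₁ h₂ hsub
    fun a ha b hb hab => (hmem a).2 (hc.properBinder_of_ssubset ((hmem b).1 hb) (hlam a ha) hab)

end ScopeConds

namespace ScToP

variable {P : V → List V} (hP : ScToP G Sc P)
include hP

theorem mem_iff {v w : V} : v ∈ P w ↔ ProperBinder G Sc v w := (hP w).1 v

theorem pairwise (w : V) : (P w).Pairwise (fun a b => Sc b ⊂ Sc a) :=
  have : Trans (fun a b => Sc b ⊂ Sc a) (fun a b => Sc b ⊂ Sc a) (fun a b => Sc b ⊂ Sc a) :=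
    ⟨fun h₁ h₂ => h₂.trans h₁⟩
  (hP w).2.pairwise

theorem lab_of_mem {v w : V} (hv : v ∈ P w) : G.lab v = .lam := (hP.mem_iff.1 hv).1

theorem pairwise_concat (hc : ScopeConds i G Sc) {w : V} (hw : G.lab w = .lam) :
    (P w ++ [w]).Pairwise (fun a b => Sc b ⊂ Sc a) :=
  List.pairwise_append.2 ⟨hP.pairwise w, List.pairwise_singleton _ _, fun a ha b hb => by
    obtain rfl := List.mem_singleton.1 hb
    exact hc.ssubset_of_properBinder (hP.mem_iff.1 ha) hw⟩

theorem correctAP (hc : ScopeConds i G Sc) : CorrectAP i G P := by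
  have ⟨hroot, hself, _, _, hscope₀, hscope₁⟩ := hc
  have lab_concat {w : V} (hw : G.lab w = .lam) : ∀ a ∈ P w ++ [w], G.lab a = .lam := by
    intro a ha
    rcases List.mem_append.1 ha with ha | ha
    · exact hP.lab_of_mem ha
    · exact List.mem_singleton.1 ha ▸ hw
  refine ⟨?_, ?_, ?_, ?_, ?_⟩
  · exact List.eq_nil_iff_forall_not_mem.2 fun v hv => hc.not_properBinder_root v (hP.mem_iff.1 hv)
  · intro w w₀ hw hk
    refine hc.prefix_of_forall_mem (hP.pairwise w₀) (fun _ => hP.mem_iff)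
      (hP.pairwise_concat hc hw) (lab_concat hw) fun v hv => ?_
    rcases hc.properBinder_of_succ hk (hP.mem_iff.1 hv) with rfl | hvw
    · exact List.mem_append_right _ (List.mem_singleton_self v)
    · exact List.mem_append_left _ (hP.mem_iff.2 hvw)
  · intro w wk k hw hk
    refine hc.prefix_of_forall_mem (hP.pairwise wk) (fun _ => hP.mem_iff) (hP.pairwise w)
      (fun _ => hP.lab_of_mem) fun v hv => ?_
    refine hP.mem_iff.2 ((hc.properBinder_of_succ hk (hP.mem_iff.1 hv)).resolve_left ?_)
    rintro rfl
    simp [hP.lab_of_mem hv] at hw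
  · intro w hw
    obtain ⟨v, hv, hwv⟩ := hscope₀ w hw
    exact List.ne_nil_of_mem (hP.mem_iff.2 ⟨hv, hwv.1, fun h => hwv.2 h.symm⟩)
  · intro h1 w w₀ hw hk
    obtain ⟨hw₀, hiff⟩ := hscope₁ h1 w w₀ hw hk
    have hne {v : V} (hv : G.lab v = .lam) : v ≠ w := ne_of_apply_ne G.lab (by simp [hv, hw])
    have hmem (v : V) : v ∈ P w₀ ++ [w₀] ↔ ProperBinder G Sc v w := by
      rw [List.mem_append, List.mem_singleton, hP.mem_iff]
      constructor
      · rintro (⟨hv, hw₀v, -⟩ | rfl)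
        · exact ⟨hv, (hiff v hv).2 hw₀v, hne hv⟩
        · exact ⟨hw₀, (hiff v hw₀).2 (hself v hw₀), hne hw₀⟩
      · rintro ⟨hv, hwv, -⟩
        exact (eq_or_ne v w₀).symm.imp_left fun h => ⟨hv, (hiff v hv).1 hwv, h⟩
    have hle : P w₀ ++ [w₀] <+: P w :=
      hc.prefix_of_forall_mem (hP.pairwise_concat hc hw₀) hmem (hP.pairwise w)
        (fun _ => hP.lab_of_mem) fun v hv => hP.mem_iff.2 ((hmem v).1 hv)
    have hge : P w <+: P w₀ ++ [w₀] :=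
      hc.prefix_of_forall_mem (hP.pairwise w) (fun _ => hP.mem_iff)
        (hP.pairwise_concat hc hw₀) (lab_concat hw₀) fun v hv => (hmem v).2 (hP.mem_iff.1 hv)
    exact ⟨hw₀, hle.sublist.antisymm hge.sublist⟩

end ScToP

end ScopeToPrefix

section PrefixToScope

variable {i : ℕ} {V : Type} {G : TermGraph Lab3 (ar3 i) V} {P : V → List V}

theorem mem_scOfP {v w : V} : w ∈ ScOfP P v ↔ v ∈ P w ∨ w = v := Iff.rfl

theorem mem_scOfP_diff_singleton (hP : ∀ w, w ∉ P w) {v w : V} :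
    w ∈ ScOfP P v \ {v} ↔ v ∈ P w := by
  refine ⟨fun ⟨hw, hwv⟩ => hw.resolve_right hwv, fun hv => ⟨.inl hv, ?_⟩⟩
  rintro rfl
  exact hP w hv

namespace CorrectAP

variable (hi : i ≤ 1) (hP : CorrectAP i G P)
include hi hP

theorem prefix_of_succ {k : ℕ} {w w' : V} (hk : G.Succ k w w') :
    P w' <+: P w ∨ G.lab w = .lam ∧ P w' <+: P w ++ [w] := by
  obtain ⟨-, hlam, happ, -, hvar⟩ := hP
  have hk_lt := G.succ_lt hk
  cases hw : G.lab w with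
  | app => exact .inl (happ w w' k hw hk)
  | lam =>
    obtain rfl : k = 0 := by simp only [hw, ar3] at hk_lt; omega
    exact .inr ⟨rfl, hlam w w' hw hk⟩
  | var =>
    simp only [hw, ar3] at hk_lt
    have hi1 : i = 1 := by omega
    obtain rfl : k = 0 := by omega
    exact .inl ⟨[w'], (hvar hi1 w w' hw hk).2⟩

theorem lab_eq_lam_and_eq_of_concat_prefix {q : List V} {v w : V} (h : q ++ [v] <+: P w) :
    G.lab v = .lam ∧ P v = q := by
  induction G.reach w with
  | refl => simp [hP.1] at h
  | @tail b c _ hbc ih =>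
    obtain ⟨k, hk⟩ := List.mem_iff_getElem?.1 hbc
    rcases hP.prefix_of_succ hi hk with hcb | ⟨hb, hcb⟩
    · exact ih (h.trans hcb)
    · rcases List.prefix_concat_iff.1 (h.trans hcb) with heq | hpre
      · obtain ⟨rfl, rfl⟩ : q = P b ∧ v = b := by simpa using heq
        exact ⟨hb, rfl⟩
      · exact ih hpre

theorem lab_eq_lam_and_eq_of_eq_append {q r : List V} {v w : V} (h : P w = q ++ v :: r) :
    G.lab v = .lam ∧ P v = q :=
  hP.lab_eq_lam_and_eq_of_concat_prefix hi (w := w) ⟨r, by simp [h]⟩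

theorem lab_of_mem {v w : V} (hv : v ∈ P w) : G.lab v = .lam :=
  have ⟨_, _, h⟩ := List.append_of_mem hv
  (hP.lab_eq_lam_and_eq_of_eq_append hi h).1

theorem notMem_self (w : V) : w ∉ P w := by
  intro hw
  obtain ⟨q, r, h⟩ := List.append_of_mem hw
  have hq := (hP.lab_eq_lam_and_eq_of_eq_append hi h).2
  simpa [hq] using congrArg List.length h

theorem mem_trans {u v w : V} (hv : v ∈ P u) (hu : u ∈ P w) : v ∈ P w := by
  obtain ⟨q, r, h⟩ := List.append_of_mem hu
  have hq := (hP.lab_eq_lam_and_eq_of_eq_append hi h).2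
  rw [h]
  exact List.mem_append_left _ (hq ▸ hv)

theorem scopeConds_scOfP : ScopeConds i G (ScOfP P) := by
  have ⟨hroot, _, _, hvar₀, hvar₁⟩ := hP
  have hsc {v w : V} : w ∈ ScOfP P v \ {v} ↔ v ∈ P w :=
    mem_scOfP_diff_singleton (hP.notMem_self hi)
  refine ⟨?_, ?_, ?_, ?_, ?_, ?_⟩
  · intro v _ hv
    rw [hsc, hroot] at hv
    exact List.not_mem_nil hv
  · exact fun v _ => .inr rfl
  · intro v₀ v₁ _ _ h w hw
    rw [hsc] at h ⊢
    rcases hw with hw | rfl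
    · exact hP.mem_trans hi h hw
    · exact h
  · intro v w wk k _ hk hwk
    rw [hsc] at hwk
    rcases hP.prefix_of_succ hi hk with h | ⟨-, h⟩
    · exact .inl (h.subset hwk)
    · exact (List.mem_append.1 (h.subset hwk)).imp_right fun h => (List.mem_singleton.1 h).symm
  · intro w hw
    obtain ⟨v, hv⟩ := List.exists_mem_of_ne_nil _ (hvar₀ w hw)
    exact ⟨v, hP.lab_of_mem hi hv, hsc.2 hv⟩
  · intro h1 w w₀ hw hk
    obtain ⟨hw₀, heq⟩ := hvar₁ h1 w w₀ hw hk
    refine ⟨hw₀, fun v hv => ?_⟩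
    have hwv : w ≠ v := ne_of_apply_ne G.lab (by simp [hw, hv])
    simp only [mem_scOfP, ← heq, List.mem_append, List.mem_singleton, hwv, or_false, eq_comm]

end CorrectAP

end PrefixToScope

/-- Proposition 3.3: the mappings A_i (from scope functions to abstraction-prefix
    functions) and B_i (from abstraction-prefix functions to scope functions) are
    well-defined between λ-ho-term-graphs and λ-ap-ho-term-graphs over Σλ^i:
    for every λ-ho-term-graph the abstraction-prefix function listing the binders in
    order of strictly decreasing scopes exists and is correct, and for every
    λ-ap-ho-term-graph the scope function Sc(v) = {w | v occurs in P(w)} ∪ {v}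
    satisfies the scope-function conditions. -/
theorem lhotg_laphotg_mappings_well_defined :
    ∀ i ∈ ({0, 1} : Set ℕ), ∀ (V : Type),
      (∀ G : LamHoTG i V,
        (∃ P : V → List V, ScToP G.toTermGraph G.Sc P) ∧
        (∀ P : V → List V, ScToP G.toTermGraph G.Sc P →
          CorrectAP i G.toTermGraph P)) ∧
      (∀ G : LamApHoTG i V, ScopeConds i G.toTermGraph (ScOfP G.P)) := by
  intro i hi V
  have hle : i ≤ 1 := by
    rcases hi with rfl | rfl <;> simp
  exact ⟨fun G => ⟨G.conds.exists_scToP, fun P hP => hP.correctAP G.conds⟩,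
    fun G => G.correct.scopeConds_scOfP hle⟩
end

section
/- Neither the class H^1 of λ-ho-term-graphs over Σλ^1 nor the class HAP^1 of λ-ap-ho-term-graphs over Σλ^1 is closed under functional bisimulations on the underlying term graphs: there exist a λ-ho-term-graph G ∈ H^1 (respectively G ∈ HAP^1), a Σλ^1-term-graph G' and a homomorphism h from the underlying term graph of G to G' such that there is no scope function (respectively no correct abstraction-prefix function) on G' making h a homomorphism of λ-ho-term-graphs (respectively of λ-ap-ho-term-graphs) from G to the resulting enriched graph. -/
/-! In the λ-term `λa. (λb. a a) (a a)`, let the scope of the vacuous binder `b` extend over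
its body. The two occurrences of `a a` are then structurally identical, so sharing them is a
homomorphism of the underlying term graphs, although only one of them lies in the scope of `b`.
After sharing, the scope of `b` would contain the shared application but not its other
predecessor, the outer application, violating (closed); and its two preimages have the
abstraction prefixes `[a, b]` and `[a]`, whose images no prefix function can both match. -/

theorem reflTransGen_of_forall_exists_lt {α : Type*} [Preorder α] [WellFoundedLT α]
    {R : α → α → Prop} {r : α} (h : ∀ v, v ≠ r → ∃ u < v, R u v) (v : α) :
    Relation.ReflTransGen R r v := by
  induction v using WellFoundedLT.induction with
  | _ v ih =>
    by_cases hv : v = r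
    · exact hv ▸ .refl
    · obtain ⟨u, hlt, huv⟩ := h v hv
      exact (ih u hlt).tail huv

theorem TermGraph.Succ.edge {L V : Type} {ar : L → ℕ} {G : TermGraph L ar V} {k : ℕ}
    {w w' : V} (hs : G.Succ k w w') : G.Edge w w' :=
  List.mem_of_getElem? hs

instance TermGraph.decidableSucc {L V : Type} {ar : L → ℕ} [DecidableEq V]
    (G : TermGraph L ar V) (k : ℕ) (w w' : V) : Decidable (G.Succ k w w') :=
  inferInstanceAs (Decidable (_ = _))

instance TermGraph.decidableEdge {L V : Type} {ar : L → ℕ} [DecidableEq V]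
    (G : TermGraph L ar V) (w w' : V) : Decidable (G.Edge w w') :=
  inferInstanceAs (Decidable (_ ∈ _))

theorem not_exists_scope_of_succ_not_mem_image {i : ℕ} {V V' : Type}
    {G : TermGraph Lab3 (ar3 i) V} {G' : TermGraph Lab3 (ar3 i) V'} {h : V → V'}
    (hh : IsHom h G G') (Sc : V → Set V) {v : V} (hv : G.lab v = .lam)
    {k : ℕ} {w' wk' : V'} (hs : G'.Succ k w' wk') (hwk : wk' ∈ h '' Sc v \ {h v})
    (hw : w' ∉ h '' Sc v) :
    ¬ ∃ Sc' : V' → Set V', ScopeConds i G' Sc' ∧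
        ∀ v, G.lab v = .lam → h '' Sc v = Sc' (h v) := by
  rintro ⟨Sc', hSc', hext⟩
  rw [hext v hv] at hwk hw
  exact hw (hSc'.2.2.2.1 (h v) w' wk' k ((hh.1 v).trans hv) hs hwk)

theorem not_exists_prefix_of_map_ne {V V' : Type} (h : V → V') (P : V → List V) {v w : V}
    (hvw : h v = h w) (hP : (P v).map h ≠ (P w).map h) :
    ¬ ∃ P' : V' → List V', ∀ u, (P u).map h = P' (h u) := by
  rintro ⟨P', hP'⟩
  exact hP ((hP' v).trans (hvw ▸ (hP' w).symm))

-- Vertices: `0` = `λa`, `1` = the outer `@`, `2` = `λb`, `3` = `a a` under `λb`,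
-- `4` = the argument `a a`, `5` = the variable `a`.
def unsharedGraph : TermGraph Lab3 (ar3 1) (Fin 6) where
  lab := ![.lam, .app, .lam, .app, .app, .var]
  args := ![[1], [2, 4], [3], [5, 5], [5, 5], [0]]
  root := 0
  args_len := by decide
  reach := reflTransGen_of_forall_exists_lt (by decide)

abbrev unsharedScope (v : Fin 6) : Set (Fin 6) :=
  {w | v = 0 ∨ (v = 2 ∧ (w = 2 ∨ w = 3))}

def unsharedPrefix : Fin 6 → List (Fin 6) := ![[], [0], [0], [0, 2], [0], [0]]

def sharedGraph : TermGraph Lab3 (ar3 1) (Fin 5) where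
  lab := ![.lam, .app, .lam, .app, .var]
  args := ![[1], [2, 3], [3], [4, 4], [0]]
  root := 0
  args_len := by decide
  reach := reflTransGen_of_forall_exists_lt (by decide)

def shareApps : Fin 6 → Fin 5 := ![0, 1, 2, 3, 3, 4]

theorem shareApps_isHom : IsHom shareApps unsharedGraph sharedGraph := by
  refine ⟨?_, ?_, rfl⟩ <;> decide

theorem unsharedGraph_scopeConds : ScopeConds 1 unsharedGraph unsharedScope := by
  have closed : ∀ v w wk : Fin 6, unsharedGraph.lab v = .lam → unsharedGraph.Edge w wk →
      wk ∈ unsharedScope v \ {v} → w ∈ unsharedScope v := by decide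
  refine ⟨by decide, by decide, by simp only [Set.subset_def]; decide,
    fun v w wk _ hv hs => closed v w wk hv hs.edge, by decide, by decide⟩

theorem unsharedPrefix_correct : CorrectAP 1 unsharedGraph unsharedPrefix := by
  have app : ∀ w wk : Fin 6, unsharedGraph.lab w = .app → unsharedGraph.Edge w wk →
      unsharedPrefix wk <+: unsharedPrefix w := by decide
  exact ⟨rfl, by decide, fun w wk _ hw hs => app w wk hw hs.edge, by decide, by decide⟩

/-- Proposition 3.7: neither the class of λ-ho-term-graphs over Σλ^1 nor the class of
    λ-ap-ho-term-graphs over Σλ^1 is closed under functional bisimulations on the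
    underlying term graphs: there is a homomorphism from the underlying term graph of
    such a graph that does not extend to the enriched graphs. -/
theorem lhotg_laphotg_not_closed_under_underlying_funbisim :
    (∃ (V V' : Type) (G : LamHoTG 1 V) (G' : TermGraph Lab3 (ar3 1) V') (h : V → V'),
      IsHom h G.toTermGraph G' ∧
      ¬ ∃ Sc' : V' → Set V', ScopeConds 1 G' Sc' ∧
          ∀ v, G.lab v = Lab3.lam → h '' G.Sc v = Sc' (h v)) ∧
    (∃ (V V' : Type) (G : LamApHoTG 1 V) (G' : TermGraph Lab3 (ar3 1) V') (h : V → V'),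
      IsHom h G.toTermGraph G' ∧
      ¬ ∃ P' : V' → List V', CorrectAP 1 G' P' ∧
          ∀ v, (G.P v).map h = P' (h v)) := by
  refine ⟨⟨Fin 6, Fin 5, ⟨unsharedGraph, unsharedScope, unsharedGraph_scopeConds⟩, sharedGraph,
      shareApps, shareApps_isHom, ?_⟩,
    ⟨Fin 6, Fin 5, ⟨unsharedGraph, unsharedPrefix, unsharedPrefix_correct⟩, sharedGraph,
      shareApps, shareApps_isHom, ?_⟩⟩
  · have image_eq : shareApps '' unsharedScope 2 = {2, 3} := by
      ext x; simp only [Set.mem_image, Set.mem_insert_iff, Set.mem_singleton_iff]; decide +revert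
    refine not_exists_scope_of_succ_not_mem_image shareApps_isHom unsharedScope (v := 2) rfl
      (k := 1) (w' := 1) (wk' := 3) (by decide) ?_ ?_ <;> rw [image_eq] <;> decide
  · rintro ⟨P', -, hP'⟩
    exact not_exists_prefix_of_map_ne shareApps unsharedPrefix (v := 3) (w := 4) rfl (by decide)
      ⟨P', hP'⟩
end

section
/- The scope-forgetful mapping U_H: H^1 → T^1 (sending a λ-ho-term-graph over Σλ^1 to its underlying Σλ^1-term-graph) and the abstraction-prefix-forgetful mapping U_P: HAP^1 → T^1 preserve but do not reflect the sharing orders. Specifically: (1) for all λ-ap-ho-term-graphs G₁, G₂ ∈ HAP^1, if there is a homomorphism of λ-ap-ho-term-graphs from G₁ to G₂, then there is a term-graph homomorphism from U_P(G₁) to U_P(G₂); and (2) there exist λ-ap-ho-term-graphs G₁, G₂ ∈ HAP^1 such that there is no homomorphism of λ-ap-ho-term-graphs from G₁ to G₂, yet there is a term-graph homomorphism from U_P(G₁) to U_P(G₂). The analogous statements hold for U_H on H^1. -/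
/-! Auxiliary: concrete counterexample graphs. -/

/-- G₁ : the term graph of `(λx.x) (λy.λz.z)` (with variable back-links). -/
def cg1 : TermGraph Lab3 (ar3 1) (Fin 6) where
  lab := ![.app, .lam, .var, .lam, .lam, .var]
  args := ![[1,3], [2], [1], [4], [5], [4]]
  root := 0
  args_len := by decide
  reach := by
    intro v
    fin_cases v
    · exact .refl
    · exact .tail (b := 0) .refl (by decide)
    · exact .tail (b := 1) (.tail (b := 0) .refl (by decide)) (by decide)
    · exact .tail (b := 0) .refl (by decide)
    · exact .tail (b := 3) (.tail (b := 0) .refl (by decide)) (by decide)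
    · exact .tail (b := 4) (.tail (b := 3) (.tail (b := 0) .refl (by decide)) (by decide)) (by decide)

/-- G₂ : a shared version, `(λx.x) (λy.⟨λx.x shared⟩)`. -/
def cg2 : TermGraph Lab3 (ar3 1) (Fin 4) where
  lab := ![.app, .lam, .var, .lam]
  args := ![[1,3], [2], [1], [1]]
  root := 0
  args_len := by decide
  reach := by
    intro v
    fin_cases v
    · exact .refl
    · exact .tail (b := 0) .refl (by decide)
    · exact .tail (b := 1) (.tail (b := 0) .refl (by decide)) (by decide)
    · exact .tail (b := 0) .refl (by decide)

def cP1 : Fin 6 → List (Fin 6) := ![[], [], [1], [], [3], [3,4]]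

def cP2 : Fin 4 → List (Fin 4) := ![[], [], [1], []]

def cscL1 : Fin 6 → List (Fin 6) := ![[0], [1,2], [2], [3,4,5], [4,5], [5]]

def cscL2 : Fin 4 → List (Fin 4) := ![[0], [1,2], [2], [3]]

def cSc1 : Fin 6 → Set (Fin 6) := fun v => {w | w ∈ cscL1 v}

def cSc2 : Fin 4 → Set (Fin 4) := fun v => {w | w ∈ cscL2 v}

lemma cP1_correct : CorrectAP 1 cg1 cP1 := by
  refine ⟨rfl, ?_, ?_, by decide, ?_⟩
  · intro w w₀ hl hs
    exact (by decide : ∀ w w₀ : Fin 6, cg1.lab w = .lam → (cg1.args w)[0]? = some w₀ →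
      cP1 w₀ <+: cP1 w ++ [w]) w w₀ hl hs
  · intro w wk k hl hs
    exact (by decide : ∀ w wk : Fin 6, cg1.lab w = .app → wk ∈ cg1.args w →
      cP1 wk <+: cP1 w) w wk hl (List.mem_of_getElem? hs)
  · intro _ w w₀ hl hs
    exact (by decide : ∀ w w₀ : Fin 6, cg1.lab w = .var → (cg1.args w)[0]? = some w₀ →
      cg1.lab w₀ = .lam ∧ cP1 w₀ ++ [w₀] = cP1 w) w w₀ hl hs

lemma cP2_correct : CorrectAP 1 cg2 cP2 := by
  refine ⟨rfl, ?_, ?_, by decide, ?_⟩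
  · intro w w₀ hl hs
    exact (by decide : ∀ w w₀ : Fin 4, cg2.lab w = .lam → (cg2.args w)[0]? = some w₀ →
      cP2 w₀ <+: cP2 w ++ [w]) w w₀ hl hs
  · intro w wk k hl hs
    exact (by decide : ∀ w wk : Fin 4, cg2.lab w = .app → wk ∈ cg2.args w →
      cP2 wk <+: cP2 w) w wk hl (List.mem_of_getElem? hs)
  · intro _ w w₀ hl hs
    exact (by decide : ∀ w w₀ : Fin 4, cg2.lab w = .var → (cg2.args w)[0]? = some w₀ →
      cg2.lab w₀ = .lam ∧ cP2 w₀ ++ [w₀] = cP2 w) w w₀ hl hs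

lemma cSc1_conds : ScopeConds 1 cg1 cSc1 := by
  refine ⟨?_, ?_, ?_, ?_, ?_, ?_⟩
  · intro v hv
    simp only [cSc1, Set.mem_diff, Set.mem_setOf_eq, Set.mem_singleton_iff]
    exact (by decide : ∀ v : Fin 6, cg1.lab v = .lam →
      ¬(cg1.root ∈ cscL1 v ∧ ¬cg1.root = v)) v hv
  · intro v hv
    exact (by decide : ∀ v : Fin 6, cg1.lab v = .lam → v ∈ cscL1 v) v hv
  · intro v₀ v₁ h0 h1 hm x hx
    simp only [cSc1, Set.mem_diff, Set.mem_setOf_eq, Set.mem_singleton_iff] at hm hx ⊢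
    exact (by decide : ∀ v₀ v₁ x : Fin 6, cg1.lab v₀ = .lam → cg1.lab v₁ = .lam →
      (v₁ ∈ cscL1 v₀ ∧ ¬v₁ = v₀) → x ∈ cscL1 v₁ →
      (x ∈ cscL1 v₀ ∧ ¬x = v₀)) v₀ v₁ x h0 h1 hm hx
  · intro v w wk k hv hs hm
    simp only [cSc1, Set.mem_diff, Set.mem_setOf_eq, Set.mem_singleton_iff] at hm ⊢
    exact (by decide : ∀ v w wk : Fin 6, cg1.lab v = .lam → wk ∈ cg1.args w →
      (wk ∈ cscL1 v ∧ ¬wk = v) → w ∈ cscL1 v) v w wk hv (List.mem_of_getElem? hs) hm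
  · intro w hw
    simp only [cSc1, Set.mem_diff, Set.mem_setOf_eq, Set.mem_singleton_iff]
    exact (by decide : ∀ w : Fin 6, cg1.lab w = .var →
      ∃ v, cg1.lab v = .lam ∧ (w ∈ cscL1 v ∧ ¬w = v)) w hw
  · intro _ w w₀ hw hs
    simp only [cSc1, Set.mem_setOf_eq]
    exact (by decide : ∀ w w₀ : Fin 6, cg1.lab w = .var → (cg1.args w)[0]? = some w₀ →
      cg1.lab w₀ = .lam ∧ ∀ v, cg1.lab v = .lam →
        (w ∈ cscL1 v ↔ w₀ ∈ cscL1 v)) w w₀ hw hs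

lemma cSc2_conds : ScopeConds 1 cg2 cSc2 := by
  refine ⟨?_, ?_, ?_, ?_, ?_, ?_⟩
  · intro v hv
    simp only [cSc2, Set.mem_diff, Set.mem_setOf_eq, Set.mem_singleton_iff]
    exact (by decide : ∀ v : Fin 4, cg2.lab v = .lam →
      ¬(cg2.root ∈ cscL2 v ∧ ¬cg2.root = v)) v hv
  · intro v hv
    exact (by decide : ∀ v : Fin 4, cg2.lab v = .lam → v ∈ cscL2 v) v hv
  · intro v₀ v₁ h0 h1 hm x hx
    simp only [cSc2, Set.mem_diff, Set.mem_setOf_eq, Set.mem_singleton_iff] at hm hx ⊢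
    exact (by decide : ∀ v₀ v₁ x : Fin 4, cg2.lab v₀ = .lam → cg2.lab v₁ = .lam →
      (v₁ ∈ cscL2 v₀ ∧ ¬v₁ = v₀) → x ∈ cscL2 v₁ →
      (x ∈ cscL2 v₀ ∧ ¬x = v₀)) v₀ v₁ x h0 h1 hm hx
  · intro v w wk k hv hs hm
    simp only [cSc2, Set.mem_diff, Set.mem_setOf_eq, Set.mem_singleton_iff] at hm ⊢
    exact (by decide : ∀ v w wk : Fin 4, cg2.lab v = .lam → wk ∈ cg2.args w →
      (wk ∈ cscL2 v ∧ ¬wk = v) → w ∈ cscL2 v) v w wk hv (List.mem_of_getElem? hs) hm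
  · intro w hw
    simp only [cSc2, Set.mem_diff, Set.mem_setOf_eq, Set.mem_singleton_iff]
    exact (by decide : ∀ w : Fin 4, cg2.lab w = .var →
      ∃ v, cg2.lab v = .lam ∧ (w ∈ cscL2 v ∧ ¬w = v)) w hw
  · intro _ w w₀ hw hs
    simp only [cSc2, Set.mem_setOf_eq]
    exact (by decide : ∀ w w₀ : Fin 4, cg2.lab w = .var → (cg2.args w)[0]? = some w₀ →
      cg2.lab w₀ = .lam ∧ ∀ v, cg2.lab v = .lam →
        (w ∈ cscL2 v ↔ w₀ ∈ cscL2 v)) w w₀ hw hs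

def cG1ap : LamApHoTG 1 (Fin 6) := ⟨cg1, cP1, cP1_correct⟩
def cG2ap : LamApHoTG 1 (Fin 4) := ⟨cg2, cP2, cP2_correct⟩
def cG1ho : LamHoTG 1 (Fin 6) := ⟨cg1, cSc1, cSc1_conds⟩
def cG2ho : LamHoTG 1 (Fin 4) := ⟨cg2, cSc2, cSc2_conds⟩

/-- The underlying term-graph homomorphism between the counterexample graphs. -/
def chom : Fin 6 → Fin 4 := ![0, 1, 2, 3, 1, 2]

lemma chom_isHom : IsHom chom cg1 cg2 := by
  refine ⟨?_, ?_, rfl⟩ <;> intro v <;> fin_cases v <;> rfl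

/-- Any term-graph homomorphism from cg1 to cg2 is forced to map 3 ↦ 3 and 4 ↦ 1. -/
lemma chom_forced {h : Fin 6 → Fin 4} (hh : IsHom h cg1 cg2) :
    h 3 = 3 ∧ h 4 = 1 := by
  obtain ⟨-, hargs, hroot⟩ := hh
  have h0 : h 0 = 0 := hroot
  have e0 := hargs 0
  rw [h0] at e0
  have h1 : h 1 = 1 ∧ h 3 = 3 := by
    have : ([1, 3] : List (Fin 4)) = [h 1, h 3] := e0
    simpa using this.symm
  have e3 := hargs 3
  rw [h1.2] at e3
  have h4 : h 4 = 1 := by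
    have : ([1] : List (Fin 4)) = [h 4] := e3
    simpa using this.symm
  exact ⟨h1.2, h4⟩

/-- Proposition 3.8: the forgetful mappings from λ-ho-term-graphs and from
    λ-ap-ho-term-graphs over Σλ^1 to their underlying term graphs preserve, but do
    not reflect, the sharing orders. -/
theorem forgetful_preserves_not_reflects_sharing :
    -- U_P preserves the sharing order
    (∀ (V₁ V₂ : Type) (G₁ : LamApHoTG 1 V₁) (G₂ : LamApHoTG 1 V₂),
      (∃ h, IsApHom h G₁.toTermGraph G₁.P G₂.toTermGraph G₂.P) →
      ∃ h, IsHom h G₁.toTermGraph G₂.toTermGraph) ∧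
    -- U_P does not reflect the sharing order
    (∃ (V₁ V₂ : Type) (G₁ : LamApHoTG 1 V₁) (G₂ : LamApHoTG 1 V₂),
      (¬ ∃ h, IsApHom h G₁.toTermGraph G₁.P G₂.toTermGraph G₂.P) ∧
      ∃ h, IsHom h G₁.toTermGraph G₂.toTermGraph) ∧
    -- U_H preserves the sharing order
    (∀ (V₁ V₂ : Type) (G₁ : LamHoTG 1 V₁) (G₂ : LamHoTG 1 V₂),
      (∃ h, IsHoHom h G₁.toTermGraph G₁.Sc G₂.toTermGraph G₂.Sc) →
      ∃ h, IsHom h G₁.toTermGraph G₂.toTermGraph) ∧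
    -- U_H does not reflect the sharing order
    (∃ (V₁ V₂ : Type) (G₁ : LamHoTG 1 V₁) (G₂ : LamHoTG 1 V₂),
      (¬ ∃ h, IsHoHom h G₁.toTermGraph G₁.Sc G₂.toTermGraph G₂.Sc) ∧
      ∃ h, IsHom h G₁.toTermGraph G₂.toTermGraph) := by
  refine ⟨?_, ?_, ?_, ?_⟩
  · rintro V₁ V₂ G₁ G₂ ⟨h, hh, -⟩
    exact ⟨h, hh⟩
  · refine ⟨Fin 6, Fin 4, cG1ap, cG2ap, ?_, chom, chom_isHom⟩
    rintro ⟨h, hh, hP⟩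
    obtain ⟨-, h4⟩ := chom_forced hh
    have := hP 4
    rw [h4] at this
    have : ([h 3] : List (Fin 4)) = [] := this
    simp at this
  · rintro V₁ V₂ G₁ G₂ ⟨h, hh, -⟩
    exact ⟨h, hh⟩
  · refine ⟨Fin 6, Fin 4, cG1ho, cG2ho, ?_, chom, chom_isHom⟩
    rintro ⟨h, hh, hSc⟩
    obtain ⟨h3, h4⟩ := chom_forced hh
    have hs := hSc 3 rfl
    rw [h3] at hs
    have hmem : h 4 ∈ h '' cG1ho.Sc 3 :=
      ⟨4, show (4 : Fin 6) ∈ cscL1 3 by decide, rfl⟩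
    rw [hs, h4] at hmem
    have : (1 : Fin 4) ∈ cscL2 3 := hmem
    simp [cscL2] at this
end
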